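/- Let w be an admissible sequence with w ∈ ℓ_r for some 1 < r < ∞, and let r* be the conjugate exponent of r. Then the canonical inclusion ℓ_{r*} ↪ d(w,1) is a bounded linear operator, and consequently the canonical inclusions d^*(w,1) ↪ ℓ_r and d_*(w,1) ↪ ℓ_r are bounded linear operators. -/

import Mathlib

/-!
If the partial sums of the decreasing rearrangement satisfy `x*(1) + ⋯ + x*(n) ≤ C W(n)` for all
`n`, Abel summation against the decreasing weights `x*^(r-1)` and Hölder's inequality give
`∑ x*^r ≤ C ∑ x*^(r-1) w ≤ C (∑ x*^r)^(1/r*) ‖w‖_r`, hence `‖x‖_r = ‖x*‖_r ≤ C ‖w‖_r`; so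
`d^*(w,1)`, and with it `d_*(w,1)`, lies in `ℓ_r`. Dually, Hölder's inequality gives
`∑ x*(i) w_i ≤ ‖x‖_{r*} ‖w‖_r`, so `ℓ_{r*}` lies in `d(w,1)`. All these spaces are Banach spaces
with continuous coordinate functionals, so the inclusions have closed graphs and are bounded.
-/

noncomputable section

open NormedSpace Filter Topology Metric

/-- The dual (transpose) of a continuous linear operator between normed spaces. -/
def dualOp (𝕜 : Type*) [RCLike 𝕜] {E F : Type*} [NormedAddCommGroup E] [NormedSpace 𝕜 E]
    [NormedAddCommGroup F] [NormedSpace 𝕜 F] (T : E →L[𝕜] F) :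
    StrongDual 𝕜 F →L[𝕜] StrongDual 𝕜 E :=
  (ContinuousLinearMap.compL 𝕜 E F 𝕜).flip T

/-- The canonical (Arens) extension of a continuous multilinear map `Φ : X × ⋯ × X → W`
to the bidual, evaluated at a point `xs` of the `N`-fold product of the bidual of `X`,
with values in the bidual of `W`.  It is obtained by extending one variable at a time,
the first variable being extended last (which corresponds to the iterated weak-star
limit `lim_{α₁} … lim_{α_N}`).  It is bundled as a continuous linear map in `Φ`. -/
def arens (𝕜 : Type*) [RCLike 𝕜] (X W : Type*) [NormedAddCommGroup X] [NormedSpace 𝕜 X]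
    [NormedAddCommGroup W] [NormedSpace 𝕜 W] :
    ∀ {N : ℕ}, (Fin N → StrongDual 𝕜 (StrongDual 𝕜 X)) →
      (ContinuousMultilinearMap 𝕜 (fun _ : Fin N => X) W →L[𝕜]
        StrongDual 𝕜 (StrongDual 𝕜 W))
  | 0, _ =>
      (NormedSpace.inclusionInDoubleDual 𝕜 W).comp
        ((continuousMultilinearCurryFin0 𝕜 X W).toContinuousLinearEquiv :
          ContinuousMultilinearMap 𝕜 (fun _ : Fin 0 => X) W ≃L[𝕜] W).toContinuousLinearMap
  | (N + 1), xs =>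
      ((ContinuousLinearMap.compL 𝕜 (StrongDual 𝕜 W) (StrongDual 𝕜 X) 𝕜 (xs 0)).comp
        ((ContinuousLinearMap.flipₗᵢ 𝕜 X (StrongDual 𝕜 W) 𝕜).toContinuousLinearEquiv.toContinuousLinearMap.comp
          ((ContinuousLinearMap.compL 𝕜 X
              (ContinuousMultilinearMap 𝕜 (fun _ : Fin N => X) W)
              (StrongDual 𝕜 (StrongDual 𝕜 W)) (arens 𝕜 X W (Fin.tail xs))).comp
            ((continuousMultilinearCurryLeftEquiv 𝕜 (fun _ : Fin (N + 1) => X)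
                W).toContinuousLinearEquiv :
              ContinuousMultilinearMap 𝕜 (fun _ : Fin (N + 1) => X) W ≃L[𝕜]
                (X →L[𝕜] ContinuousMultilinearMap 𝕜 (fun _ : Fin N => X) W)).toContinuousLinearMap)))

end

section Core2

open NormedSpace Filter Topology Metric

variable (𝕜 : Type*) [RCLike 𝕜] {X W : Type*} [NormedAddCommGroup X] [NormedSpace 𝕜 X]
  [NormedAddCommGroup W] [NormedSpace 𝕜 W] {N : ℕ}

/-- The norm of the `N`-homogeneous polynomial associated to a continuous multilinear map,
i.e. the supremum of `‖Φ (x, …, x)‖` over the closed unit ball. -/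
noncomputable def polyNorm (Φ : ContinuousMultilinearMap 𝕜 (fun _ : Fin N => X) W) : ℝ :=
  ⨆ x : Metric.closedBall (0 : X) 1, ‖Φ (fun _ => (x : X))‖

/-- A multilinear map is symmetric if it is invariant under permutation of its arguments. -/
def IsSymmetricMap (Φ : ContinuousMultilinearMap 𝕜 (fun _ : Fin N => X) W) : Prop :=
  ∀ (σ : Equiv.Perm (Fin N)) (m : Fin N → X), Φ (fun i => m (σ i)) = Φ m

/-- The polynomial associated to `Φ` attains its norm on the closed unit ball. -/
def PolyNormAttaining (Φ : ContinuousMultilinearMap 𝕜 (fun _ : Fin N => X) W) : Prop :=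
  ∃ a : X, ‖a‖ ≤ 1 ∧ ‖Φ (fun _ => a)‖ = polyNorm 𝕜 Φ

/-- The Aron–Berner extension of the polynomial associated to `Φ` attains its norm on the
closed unit ball of the bidual.  (Recall that the Aron–Berner extension has the same norm
as the polynomial itself.) -/
def ABNormAttaining (Φ : ContinuousMultilinearMap 𝕜 (fun _ : Fin N => X) W) : Prop :=
  ∃ a'' : StrongDual 𝕜 (StrongDual 𝕜 X), ‖a''‖ ≤ 1 ∧
    ‖arens 𝕜 X W (fun _ => a'') Φ‖ = polyNorm 𝕜 Φ

/-- A normed space `E` has the approximation property if the identity map can be approximated,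
uniformly on compact sets, by continuous finite-rank operators. -/
def HasApproximationProperty (E : Type*) [NormedAddCommGroup E] [NormedSpace 𝕜 E] : Prop :=
  ∀ K : Set E, IsCompact K → ∀ ε : ℝ, 0 < ε →
    ∃ T : E →L[𝕜] E, FiniteDimensional 𝕜 (LinearMap.range (T : E →ₗ[𝕜] E)) ∧
      ∀ x ∈ K, ‖T x - x‖ ≤ ε

end Core2

section Lorentz

open Filter Topology

variable {𝕜 : Type*} [RCLike 𝕜]

/-- `decRearr x n` is the `(n+1)`-th largest value of the sequence `(‖x i‖)_i`, i.e. the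
decreasing rearrangement `x*` of `x` (indexed from `0`). -/
noncomputable def decRearr (x : ℕ → 𝕜) (n : ℕ) : ℝ :=
  sInf {r : ℝ | 0 ≤ r ∧ {i : ℕ | r < ‖x i‖}.Finite ∧ {i : ℕ | r < ‖x i‖}.ncard ≤ n}

/-- `lorentzW w n = W(n) = w_1 + ⋯ + w_n` (with `w` indexed from `0`). -/
def lorentzW (w : ℕ → ℝ) (n : ℕ) : ℝ := ∑ i ∈ Finset.range n, w i

/-- The quotient `(x*(1) + ⋯ + x*(n+1)) / W(n+1)`. -/
noncomputable def lorentzRatio (w : ℕ → ℝ) (x : ℕ → 𝕜) (n : ℕ) : ℝ :=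
  (∑ i ∈ Finset.range (n + 1), decRearr x i) / lorentzW w (n + 1)

/-- The norm `‖x‖_W = sup_n (x*(1) + ⋯ + x*(n)) / W(n)` of `d^*(w,1)`. -/
noncomputable def lorentzDualNorm (w : ℕ → ℝ) (x : ℕ → 𝕜) : ℝ :=
  ⨆ n, lorentzRatio w x n

/-- The norm `‖x‖_{w,1} = Σ_i x*(i) w_i` of the Lorentz sequence space `d(w,1)`. -/
noncomputable def lorentzSumNorm (w : ℕ → ℝ) (x : ℕ → 𝕜) : ℝ :=
  ∑' i, decRearr x i * w i

/-- An admissible sequence: a decreasing sequence of nonnegative reals with `w 0 = 1`,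
tending to `0`, whose series diverges. -/
def IsAdmissible (w : ℕ → ℝ) : Prop :=
  w 0 = 1 ∧ (∀ n, 0 ≤ w n) ∧ Antitone w ∧ Tendsto w atTop (𝓝 0) ∧ ¬ Summable w

/-- Membership in `d^*(w,1)`: bounded sequences with `‖x‖_W < ∞`. -/
def MemLorentzDual (w : ℕ → ℝ) (x : ℕ → 𝕜) : Prop :=
  BddAbove (Set.range fun i => ‖x i‖) ∧ BddAbove (Set.range (lorentzRatio w x))

/-- Membership in the predual `d_*(w,1)`: bounded sequences with
`(x*(1) + ⋯ + x*(n)) / W(n) → 0`. -/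
def MemLorentzPredual (w : ℕ → ℝ) (x : ℕ → 𝕜) : Prop :=
  BddAbove (Set.range fun i => ‖x i‖) ∧ Tendsto (lorentzRatio w x) atTop (𝓝 0)

/-- Membership in the Lorentz sequence space `d(w,1)`. -/
def MemLorentzSpace (w : ℕ → ℝ) (x : ℕ → 𝕜) : Prop :=
  BddAbove (Set.range fun i => ‖x i‖) ∧ Summable fun i => decRearr x i * w i

variable (𝕜)

/-- `E` (with the linear coordinate embedding `toSeq`) is a realization of the predual
`d_*(w,1)` of the Lorentz sequence space `d(w,1)`. -/
structure IsLorentzPredual (w : ℕ → ℝ) (E : Type*) [NormedAddCommGroup E] [NormedSpace 𝕜 E]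
    (toSeq : E →ₗ[𝕜] (ℕ → 𝕜)) : Prop where
  inj : Function.Injective toSeq
  mem_range : ∀ x : ℕ → 𝕜, (∃ e, toSeq e = x) ↔ MemLorentzPredual w x
  norm_eq : ∀ e, ‖e‖ = lorentzDualNorm w (toSeq e)

/-- `E` (with the linear coordinate embedding `toSeq`) is a realization of the dual
`d^*(w,1)` of the Lorentz sequence space `d(w,1)`. -/
structure IsLorentzDual (w : ℕ → ℝ) (E : Type*) [NormedAddCommGroup E] [NormedSpace 𝕜 E]
    (toSeq : E →ₗ[𝕜] (ℕ → 𝕜)) : Prop where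
  inj : Function.Injective toSeq
  mem_range : ∀ x : ℕ → 𝕜, (∃ e, toSeq e = x) ↔ MemLorentzDual w x
  norm_eq : ∀ e, ‖e‖ = lorentzDualNorm w (toSeq e)

/-- `E` (with the linear coordinate embedding `toSeq`) is a realization of the Lorentz
sequence space `d(w,1)`. -/
structure IsLorentzSpace (w : ℕ → ℝ) (E : Type*) [NormedAddCommGroup E] [NormedSpace 𝕜 E]
    (toSeq : E →ₗ[𝕜] (ℕ → 𝕜)) : Prop where
  inj : Function.Injective toSeq
  mem_range : ∀ x : ℕ → 𝕜, (∃ e, toSeq e = x) ↔ MemLorentzSpace w x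
  norm_eq : ∀ e, ‖e‖ = lorentzSumNorm w (toSeq e)

end Lorentz

open Filter Topology

section ClosedGraph

variable {𝕜 : Type*} [NontriviallyNormedField 𝕜]
  {E F : Type*} [NormedAddCommGroup E] [NormedSpace 𝕜 E] [NormedAddCommGroup F]
  [NormedSpace 𝕜 F]

theorem exists_continuousLinearMap_of_range_le [CompleteSpace E] [CompleteSpace F]
    {G : Type*} [AddCommGroup G] [Module 𝕜 G] [TopologicalSpace G] [T2Space G]
    (u : E →ₗ[𝕜] G) (v : F →ₗ[𝕜] G) (hu : Continuous u) (hv : Continuous v)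
    (hv_inj : Function.Injective v) (hrange : LinearMap.range u ≤ LinearMap.range v) :
    ∃ T : E →L[𝕜] F, ∀ e, v (T e) = u e := by
  let T : E →ₗ[𝕜] F := (LinearEquiv.ofInjective v hv_inj).symm.toLinearMap ∘ₗ
    u.codRestrict (LinearMap.range v) fun e => hrange ⟨e, rfl⟩
  have hT : ∀ e, v (T e) = u e := fun e =>
    congrArg Subtype.val ((LinearEquiv.ofInjective v hv_inj).apply_symm_apply _)
  have hgraph : (T.graph : Set (E × F)) = {p | v p.2 = u p.1} := by
    ext ⟨e, f⟩
    simp only [SetLike.mem_coe, LinearMap.mem_graph_iff, Set.mem_ofPred_eq]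
    exact ⟨fun h => h ▸ hT e, fun h => hv_inj (h.trans (hT e).symm)⟩
  refine ⟨⟨T, T.continuous_of_isClosed_graph ?_⟩, hT⟩
  rw [hgraph]
  exact isClosed_eq (hv.comp continuous_snd) (hu.comp continuous_fst)

theorem continuous_of_norm_apply_le {ι : Type*} (u : E →ₗ[𝕜] (ι → 𝕜))
    (h : ∀ e i, ‖u e i‖ ≤ ‖e‖) : Continuous u :=
  continuous_pi fun i =>
    AddMonoidHomClass.continuous_of_bound (LinearMap.proj i ∘ₗ u) 1 fun e => by simpa using h e i

end ClosedGraph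

section LpCoordinates

variable {𝕜 : Type*} [NormedField 𝕜] {α : Type*} (E : α → Type*) [∀ i, NormedAddCommGroup (E i)]
  [∀ i, NormedSpace 𝕜 (E i)] (p : ENNReal) [Fact (1 ≤ p)]

def lp.coeLinearMap : lp E p →ₗ[𝕜] (∀ i, E i) where
  toFun f := f
  map_add' := lp.coeFn_add
  map_smul' := lp.coeFn_smul

theorem lp.continuous_coeLinearMap : Continuous (lp.coeLinearMap (𝕜 := 𝕜) E p) :=
  lp.uniformContinuous_coe.continuous

end LpCoordinates

section DecreasingRearrangement

open Finset

variable {𝕜 : Type*} [RCLike 𝕜] {x : ℕ → 𝕜}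

theorem decRearr_nonneg (x : ℕ → 𝕜) (n : ℕ) : 0 ≤ decRearr x n :=
  Real.sInf_nonneg fun _ hr => hr.1

theorem decRearr_le {n : ℕ} {r : ℝ} (hr : 0 ≤ r) (hfin : {i | r < ‖x i‖}.Finite)
    (hcard : {i | r < ‖x i‖}.ncard ≤ n) : decRearr x n ≤ r :=
  csInf_le ⟨0, fun _ hr => hr.1⟩ ⟨hr, hfin, hcard⟩

theorem le_decRearr_iff (hx : BddAbove (Set.range fun i => ‖x i‖)) {n : ℕ} {t : ℝ} :
    t ≤ decRearr x n ↔ ∀ r, 0 ≤ r → {i | r < ‖x i‖}.Finite → {i | r < ‖x i‖}.ncard ≤ n →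
      t ≤ r := by
  obtain ⟨M, hM⟩ := hx
  have hM0 : 0 ≤ M := (norm_nonneg _).trans (hM ⟨0, rfl⟩)
  have hempty : {i | M < ‖x i‖} = ∅ :=
    Set.eq_empty_of_forall_notMem fun i hi => (hM ⟨i, rfl⟩).not_gt hi
  unfold decRearr
  rw [le_csInf_iff (by exact ⟨0, fun _ hr => hr.1⟩) (by exact ⟨M, hM0, by simp [hempty]⟩)]
  exact ⟨fun h r hr hfin hcard => h r ⟨hr, hfin, hcard⟩, fun h r hr => h r hr.1 hr.2.1 hr.2.2⟩

theorem le_decRearr_of_le_norm (hx : BddAbove (Set.range fun i => ‖x i‖)) {n : ℕ} {t : ℝ}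
    (S : Finset ℕ) (hS : ∀ i ∈ S, t ≤ ‖x i‖) (hcard : n + 1 ≤ S.card) : t ≤ decRearr x n := by
  refine (le_decRearr_iff hx).2 fun r _ hfin hcard' => le_of_not_gt fun hrt => ?_
  have hsub : (S : Set ℕ) ⊆ {i | r < ‖x i‖} := fun i hi => hrt.trans_le (hS i hi)
  have := Set.ncard_le_ncard hsub hfin
  rw [Set.ncard_coe_finset] at this
  omega

theorem norm_le_decRearr_zero (hx : BddAbove (Set.range fun i => ‖x i‖)) (i : ℕ) :
    ‖x i‖ ≤ decRearr x 0 :=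
  le_decRearr_of_le_norm hx {i} (by simp) (by simp)

theorem antitone_decRearr (hx : BddAbove (Set.range fun i => ‖x i‖)) : Antitone (decRearr x) :=
  antitone_nat_of_succ_le fun n => (le_decRearr_iff hx).2 fun _ hr hfin hcard =>
    decRearr_le hr hfin (hcard.trans n.le_succ)

theorem exists_finset_card_eq_lt_norm {n : ℕ} {t : ℝ} (ht : 0 ≤ t) (h : t < decRearr x n) :
    ∃ S : Finset ℕ, S.card = n + 1 ∧ ∀ i ∈ S, t < ‖x i‖ := by
  by_cases hfin : {i | t < ‖x i‖}.Finite
  · have hcard : n + 1 ≤ {i | t < ‖x i‖}.ncard :=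
      le_of_not_gt fun hlt => (decRearr_le ht hfin (Nat.lt_succ_iff.1 hlt)).not_gt h
    obtain ⟨T, hT, hTcard⟩ := Set.exists_subset_card_eq hcard
    have hTfin : T.Finite := hfin.subset hT
    refine ⟨hTfin.toFinset, ?_, fun i hi => hT (hTfin.mem_toFinset.1 hi)⟩
    rwa [Set.ncard_eq_toFinset_card _ hTfin] at hTcard
  · obtain ⟨S, hS, hScard⟩ := Set.Infinite.exists_subset_card_eq hfin (n + 1)
    exact ⟨S, hScard, fun i hi => hS hi⟩

theorem sum_le_sum_decRearr (hx : BddAbove (Set.range fun i => ‖x i‖)) {φ : ℝ → ℝ}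
    (hφ : MonotoneOn φ (Set.Ici 0)) (F : Finset ℕ) :
    ∑ i ∈ F, φ ‖x i‖ ≤ ∑ n ∈ range F.card, φ (decRearr x n) := by
  induction F using Finset.induction_on_min_value (fun i => ‖x i‖) with
  | empty => simp
  | insert a F ha hmin ih =>
    have hle : ‖x a‖ ≤ decRearr x F.card :=
      le_decRearr_of_le_norm hx (insert a F)
        ((forall_mem_insert _ _ _).2 ⟨le_rfl, hmin⟩) (card_insert_of_notMem ha).ge
    rw [sum_insert ha, card_insert_of_notMem ha, sum_range_succ, add_comm]
    exact add_le_add ih (hφ (norm_nonneg _) (decRearr_nonneg x _) hle)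

-- The infimum defining `decRearr x n` need not be attained, hence the slack factor `t < 1`.
theorem exists_notMem_mul_decRearr_le (G : Finset ℕ) {t : ℝ} (ht0 : 0 ≤ t) (ht1 : t < 1) :
    ∃ i ∉ G, t * decRearr x G.card ≤ ‖x i‖ := by
  rcases (decRearr_nonneg x G.card).eq_or_lt with h | h
  · obtain ⟨i, hi⟩ := G.exists_notMem
    exact ⟨i, hi, by rw [← h, mul_zero]; exact norm_nonneg _⟩
  · obtain ⟨S, hScard, hS⟩ :=
      exists_finset_card_eq_lt_norm (mul_nonneg ht0 h.le) (mul_lt_of_lt_one_left h ht1)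
    obtain ⟨i, hi⟩ : (S \ G).Nonempty := by
      rw [← card_pos]
      have := le_card_sdiff G S
      omega
    rw [Finset.mem_sdiff] at hi
    exact ⟨i, hi.2, (hS i hi.1).le⟩

theorem exists_finset_sum_mul_decRearr_le {φ : ℝ → ℝ} (hφ : MonotoneOn φ (Set.Ici 0))
    {t : ℝ} (ht0 : 0 ≤ t) (ht1 : t < 1) (N : ℕ) :
    ∃ G : Finset ℕ, G.card = N ∧
      ∑ n ∈ range N, φ (t * decRearr x n) ≤ ∑ i ∈ G, φ ‖x i‖ := by
  induction N with
  | zero => exact ⟨∅, rfl, by simp⟩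
  | succ N ih =>
    obtain ⟨G, rfl, hG⟩ := ih
    obtain ⟨i, hi, hle⟩ := exists_notMem_mul_decRearr_le (x := x) G ht0 ht1
    refine ⟨insert i G, card_insert_of_notMem hi, ?_⟩
    rw [sum_range_succ, sum_insert hi, add_comm (φ ‖x i‖)]
    exact add_le_add hG
      (hφ (mul_nonneg ht0 (decRearr_nonneg x _)) (norm_nonneg _) hle)

theorem sum_decRearr_rpow_le_tsum {p : ℝ} (hp : 0 < p) (hsum : Summable fun i => ‖x i‖ ^ p)
    (N : ℕ) : ∑ n ∈ range N, decRearr x n ^ p ≤ ∑' i, ‖x i‖ ^ p := by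
  have hscaled : ∀ t ∈ Set.Ico (0 : ℝ) 1,
      t ^ p * ∑ n ∈ range N, decRearr x n ^ p ≤ ∑' i, ‖x i‖ ^ p := by
    rintro t ⟨ht0, ht1⟩
    obtain ⟨G, -, hG⟩ := exists_finset_sum_mul_decRearr_le (x := x)
      (Real.monotoneOn_rpow_Ici_of_exponent_nonneg hp.le) ht0 ht1 N
    simp only [Real.mul_rpow ht0 (decRearr_nonneg x _), ← mul_sum] at hG
    exact hG.trans (hsum.sum_le_tsum G fun i _ => by positivity)
  have hlim : Tendsto (fun t : ℝ => t ^ p * ∑ n ∈ range N, decRearr x n ^ p) (𝓝[<] 1)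
      (𝓝 (∑ n ∈ range N, decRearr x n ^ p)) := by
    have := ((Real.continuousAt_rpow_const 1 p (Or.inr hp.le)).tendsto.mono_left
      (nhdsWithin_le_nhds (s := Set.Iio 1))).mul_const (∑ n ∈ range N, decRearr x n ^ p)
    simpa using this
  exact le_of_tendsto hlim (Filter.mem_of_superset (Ico_mem_nhdsLT zero_lt_one) hscaled)

end DecreasingRearrangement

section RealInequalities

open Finset

theorem sum_range_mul_nonneg_of_antitone {b e : ℕ → ℝ} (hb : Antitone b) (hb0 : ∀ n, 0 ≤ b n)
    (he : ∀ m, 0 ≤ ∑ k ∈ range m, e k) (N : ℕ) : 0 ≤ ∑ n ∈ range N, b n * e n := by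
  have hparts := sum_range_by_parts b e N
  simp only [smul_eq_mul] at hparts
  rw [hparts, sub_nonneg]
  exact (sum_nonpos fun i _ =>
      mul_nonpos_of_nonpos_of_nonneg (sub_nonpos.2 (hb i.le_succ)) (he _)).trans
    (mul_nonneg (hb0 _) (he _))

theorem Real.rpow_sub_one_mul_self {a r : ℝ} (ha : 0 ≤ a) (hr : r ≠ 0) :
    a ^ (r - 1) * a = a ^ r := by
  rcases ha.eq_or_lt with rfl | ha
  · simp [Real.zero_rpow hr]
  · rw [Real.rpow_sub_one ha.ne', div_mul_cancel₀ _ ha.ne']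

theorem le_rpow_of_le_mul_rpow {r s A K : ℝ} (hrs : r.HolderConjugate s) (hA : 0 ≤ A)
    (hK : 0 ≤ K) (h : A ≤ K * A ^ (1 / s)) : A ≤ K ^ r := by
  rcases hA.eq_or_lt with rfl | hA
  · exact Real.rpow_nonneg hK r
  have hAr : A ^ (1 / r) ≤ K := by
    have hsplit : A ^ (1 / r) * A ^ (1 / s) = A := by
      rw [← Real.rpow_add hA, one_div, one_div, hrs.inv_add_inv_eq_one, Real.rpow_one]
    exact le_of_mul_le_mul_right (by rwa [hsplit]) (Real.rpow_pos_of_pos hA _)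
  calc A = (A ^ (1 / r)) ^ r := by
        rw [← Real.rpow_mul hA.le, one_div_mul_cancel hrs.ne_zero, Real.rpow_one]
    _ ≤ K ^ r := Real.rpow_le_rpow (by positivity) hAr hrs.nonneg

end RealInequalities

section LorentzNorms

open Finset

variable {𝕜 : Type*} [RCLike 𝕜] {w : ℕ → ℝ} {x : ℕ → 𝕜}

theorem IsAdmissible.lorentzW_succ_pos (hw : IsAdmissible w) (n : ℕ) :
    0 < lorentzW w (n + 1) :=
  one_pos.trans_le <| hw.1 ▸ single_le_sum (fun i _ => hw.2.1 i) (mem_range.2 n.succ_pos)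

theorem lorentzRatio_nonneg (hw : ∀ n, 0 ≤ w n) (x : ℕ → 𝕜) (n : ℕ) :
    0 ≤ lorentzRatio w x n :=
  div_nonneg (sum_nonneg fun k _ => decRearr_nonneg x k) (sum_nonneg fun k _ => hw k)

theorem lorentzRatio_zero (hw : w 0 = 1) (x : ℕ → 𝕜) : lorentzRatio w x 0 = decRearr x 0 := by
  simp [lorentzRatio, lorentzW, hw]

theorem MemLorentzDual.lorentzRatio_le (hx : MemLorentzDual w x) (n : ℕ) :
    lorentzRatio w x n ≤ lorentzDualNorm w x :=
  le_ciSup hx.2 n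

theorem MemLorentzPredual.memLorentzDual (hx : MemLorentzPredual w x) : MemLorentzDual w x :=
  ⟨hx.1, hx.2.bddAbove_range⟩

theorem MemLorentzDual.sum_decRearr_le (hw : IsAdmissible w) (hx : MemLorentzDual w x)
    (m : ℕ) : ∑ k ∈ range m, decRearr x k ≤ lorentzDualNorm w x * lorentzW w m := by
  cases m with
  | zero => simp [lorentzW]
  | succ n =>
    have := hx.lorentzRatio_le n
    rwa [lorentzRatio, div_le_iff₀ (hw.lorentzW_succ_pos n)] at this

theorem MemLorentzDual.sum_decRearr_rpow_le (hw : IsAdmissible w) {r s : ℝ}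
    (hrs : r.HolderConjugate s) (hwr : Summable fun i => w i ^ r) (hx : MemLorentzDual w x)
    (N : ℕ) :
    ∑ n ∈ range N, decRearr x n ^ r ≤
      (lorentzDualNorm w x * (∑' i, w i ^ r) ^ (1 / r)) ^ r := by
  set C := lorentzDualNorm w x
  set A := ∑ n ∈ range N, decRearr x n ^ r
  have hd0 := decRearr_nonneg x
  have hC0 : 0 ≤ C := (lorentzRatio_nonneg hw.2.1 x 0).trans (hx.lorentzRatio_le 0)
  have habel : ∑ n ∈ range N, decRearr x n ^ (r - 1) * decRearr x n ≤
      C * ∑ n ∈ range N, decRearr x n ^ (r - 1) * w n := by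
    have hweights : Antitone fun n => decRearr x n ^ (r - 1) := fun m n hmn =>
      Real.rpow_le_rpow (hd0 n) (antitone_decRearr hx.1 hmn) (sub_nonneg.2 hrs.lt.le)
    have := sum_range_mul_nonneg_of_antitone hweights (fun n => Real.rpow_nonneg (hd0 n) _)
      (e := fun n => C * w n - decRearr x n)
      (fun m => by
        simpa [sum_sub_distrib, ← mul_sum, lorentzW] using hx.sum_decRearr_le hw m) N
    simpa [mul_sub, sum_sub_distrib, mul_sum, mul_left_comm] using this
  have hholder : ∑ n ∈ range N, decRearr x n ^ (r - 1) * w n ≤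
      A ^ (1 / s) * (∑' i, w i ^ r) ^ (1 / r) := by
    have hpow : ∑ n ∈ range N, (decRearr x n ^ (r - 1)) ^ s = A :=
      sum_congr rfl fun n _ => by rw [← Real.rpow_mul (hd0 n), hrs.sub_one_mul_conj]
    refine (Real.inner_le_Lp_mul_Lq_of_nonneg _ hrs.symm (fun n _ => Real.rpow_nonneg (hd0 n) _)
      (fun n _ => hw.2.1 n)).trans ?_
    rw [hpow]
    exact mul_le_mul_of_nonneg_left (Real.rpow_le_rpow
      (sum_nonneg fun i _ => Real.rpow_nonneg (hw.2.1 i) r)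
      (hwr.sum_le_tsum _ fun i _ => Real.rpow_nonneg (hw.2.1 i) r) (by simp [hrs.nonneg]))
      (Real.rpow_nonneg (sum_nonneg fun n _ => Real.rpow_nonneg (hd0 n) r) _)
  refine le_rpow_of_le_mul_rpow hrs (sum_nonneg fun n _ => Real.rpow_nonneg (hd0 n) r)
    (mul_nonneg hC0 (Real.rpow_nonneg (tsum_nonneg fun i => Real.rpow_nonneg (hw.2.1 i) r) _)) ?_
  calc A = ∑ n ∈ range N, decRearr x n ^ (r - 1) * decRearr x n :=
        sum_congr rfl fun n _ => (Real.rpow_sub_one_mul_self (hd0 n) hrs.ne_zero).symm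
    _ ≤ C * (A ^ (1 / s) * (∑' i, w i ^ r) ^ (1 / r)) :=
        habel.trans (mul_le_mul_of_nonneg_left hholder hC0)
    _ = C * (∑' i, w i ^ r) ^ (1 / r) * A ^ (1 / s) := by ring

theorem MemLorentzDual.memℓp (hw : IsAdmissible w) {r s : ℝ} (hrs : r.HolderConjugate s)
    (hwr : Summable fun i => w i ^ r) (hx : MemLorentzDual w x) :
    Memℓp x (ENNReal.ofReal r) := by
  apply memℓp_gen
  rw [ENNReal.toReal_ofReal hrs.nonneg]
  exact summable_of_sum_le (fun i => Real.rpow_nonneg (norm_nonneg _) r) fun F =>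
    (sum_le_sum_decRearr hx.1 (Real.monotoneOn_rpow_Ici_of_exponent_nonneg hrs.nonneg) F).trans
    (hx.sum_decRearr_rpow_le hw hrs hwr F.card)

theorem Memℓp.memLorentzSpace (hw : IsAdmissible w) {r s : ℝ} (hrs : r.HolderConjugate s)
    (hwr : Summable fun i => w i ^ r) (hx : Memℓp x (ENNReal.ofReal s)) :
    MemLorentzSpace w x := by
  have hs : 0 < s := hrs.symm.pos
  have hs' : (ENNReal.ofReal s).toReal = s := ENNReal.toReal_ofReal hs.le
  have hsum : Summable fun i => ‖x i‖ ^ s := by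
    simpa [hs'] using (memℓp_gen_iff (hs'.symm ▸ hs)).1 hx
  refine ⟨memℓp_infty_iff.1 (hx.of_exponent_ge le_top), ?_⟩
  exact Real.summable_mul_of_Lp_Lq_of_nonneg hrs.symm (decRearr_nonneg x) hw.2.1
    (summable_of_sum_range_le (fun n => Real.rpow_nonneg (decRearr_nonneg x n) s)
      (sum_decRearr_rpow_le_tsum hs hsum)) hwr

theorem MemLorentzSpace.norm_le_lorentzSumNorm (hw : IsAdmissible w) (hx : MemLorentzSpace w x)
    (i : ℕ) : ‖x i‖ ≤ lorentzSumNorm w x :=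
  calc ‖x i‖ ≤ decRearr x 0 * w 0 := by rw [hw.1, mul_one]; exact norm_le_decRearr_zero hx.1 i
    _ ≤ lorentzSumNorm w x :=
        hx.2.le_tsum 0 fun j _ => mul_nonneg (decRearr_nonneg x j) (hw.2.1 j)

theorem MemLorentzDual.norm_le_lorentzDualNorm (hw : IsAdmissible w) (hx : MemLorentzDual w x)
    (i : ℕ) : ‖x i‖ ≤ lorentzDualNorm w x :=
  calc ‖x i‖ ≤ lorentzRatio w x 0 := lorentzRatio_zero hw.1 x ▸ norm_le_decRearr_zero hx.1 i
    _ ≤ lorentzDualNorm w x := hx.lorentzRatio_le 0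

end LorentzNorms

section CanonicalInclusions

variable {𝕜 : Type*} [RCLike 𝕜] {w : ℕ → ℝ} {E : Type*} [NormedAddCommGroup E] [NormedSpace 𝕜 E]
  {toSeq : E →ₗ[𝕜] (ℕ → 𝕜)}

theorem IsLorentzSpace.continuous_toSeq (hw : IsAdmissible w)
    (hE : IsLorentzSpace 𝕜 w E toSeq) : Continuous toSeq :=
  continuous_of_norm_apply_le toSeq fun e i =>
    hE.norm_eq e ▸ ((hE.mem_range _).1 ⟨e, rfl⟩).norm_le_lorentzSumNorm hw i

theorem IsLorentzDual.memLorentzDual (hE : IsLorentzDual 𝕜 w E toSeq) (e : E) :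
    MemLorentzDual w (toSeq e) :=
  (hE.mem_range _).1 ⟨e, rfl⟩

theorem IsLorentzPredual.memLorentzDual (hE : IsLorentzPredual 𝕜 w E toSeq) (e : E) :
    MemLorentzDual w (toSeq e) :=
  ((hE.mem_range _).1 ⟨e, rfl⟩).memLorentzDual

theorem exists_lp_inclusion_of_memLorentzDual [CompleteSpace E] (hw : IsAdmissible w)
    {r s : ℝ} (hrs : r.HolderConjugate s) [Fact (1 ≤ ENNReal.ofReal r)]
    (hwr : Summable fun i => w i ^ r) (hmem : ∀ e, MemLorentzDual w (toSeq e))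
    (hnorm : ∀ e, ‖e‖ = lorentzDualNorm w (toSeq e)) :
    ∃ S : E →L[𝕜] lp (fun _ : ℕ => 𝕜) (ENNReal.ofReal r),
      ∀ e, ((S e : lp (fun _ : ℕ => 𝕜) (ENNReal.ofReal r)) : ∀ _ : ℕ, 𝕜) = toSeq e :=
  exists_continuousLinearMap_of_range_le toSeq
    (lp.coeLinearMap (fun _ : ℕ => 𝕜) (ENNReal.ofReal r))
    (continuous_of_norm_apply_le toSeq fun e i =>
      hnorm e ▸ (hmem e).norm_le_lorentzDualNorm hw i)
    (lp.continuous_coeLinearMap _ _) (fun _ _ => lp.ext)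
    (by rintro _ ⟨e, rfl⟩; exact ⟨⟨toSeq e, (hmem e).memℓp hw hrs hwr⟩, rfl⟩)

end CanonicalInclusions

/-- The boundedness of the canonical inclusions (1.4): if `w` is an admissible sequence with
`w ∈ ℓ_r` for some `1 < r < ∞` and `r*` is the conjugate exponent of `r`, then the canonical
inclusion `ℓ_{r*} ↪ d(w,1)` is bounded, and consequently so are the canonical inclusions
`d^*(w,1) ↪ ℓ_r` and `d_*(w,1) ↪ ℓ_r`. -/
theorem lorentz_canonical_inclusions
    {𝕜 : Type*} [RCLike 𝕜] (w : ℕ → ℝ) (hw : IsAdmissible w)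
    (r s : ℝ) (hrs : Real.HolderConjugate r s)
    [Fact (1 ≤ ENNReal.ofReal r)] [Fact (1 ≤ ENNReal.ofReal s)]
    (hwr : Summable fun i => w i ^ r)
    (D : Type*) [NormedAddCommGroup D] [NormedSpace 𝕜 D] [CompleteSpace D]
    (toSeqD : D →ₗ[𝕜] (ℕ → 𝕜)) (hD : IsLorentzSpace 𝕜 w D toSeqD)
    (Dd : Type*) [NormedAddCommGroup Dd] [NormedSpace 𝕜 Dd] [CompleteSpace Dd]
    (toSeqDd : Dd →ₗ[𝕜] (ℕ → 𝕜)) (hDd : IsLorentzDual 𝕜 w Dd toSeqDd)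
    (Dp : Type*) [NormedAddCommGroup Dp] [NormedSpace 𝕜 Dp] [CompleteSpace Dp]
    (toSeqDp : Dp →ₗ[𝕜] (ℕ → 𝕜)) (hDp : IsLorentzPredual 𝕜 w Dp toSeqDp) :
    (∃ T : lp (fun _ : ℕ => 𝕜) (ENNReal.ofReal s) →L[𝕜] D,
      ∀ f, toSeqD (T f) = (f : ∀ _ : ℕ, 𝕜)) ∧
    (∃ S : Dd →L[𝕜] lp (fun _ : ℕ => 𝕜) (ENNReal.ofReal r),
      ∀ e, ((S e : lp (fun _ : ℕ => 𝕜) (ENNReal.ofReal r)) : ∀ _ : ℕ, 𝕜) = toSeqDd e) ∧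
    (∃ S' : Dp →L[𝕜] lp (fun _ : ℕ => 𝕜) (ENNReal.ofReal r),
      ∀ e, ((S' e : lp (fun _ : ℕ => 𝕜) (ENNReal.ofReal r)) : ∀ _ : ℕ, 𝕜) = toSeqDp e) := by
  refine ⟨?_, exists_lp_inclusion_of_memLorentzDual hw hrs hwr hDd.memLorentzDual hDd.norm_eq,
    exists_lp_inclusion_of_memLorentzDual hw hrs hwr hDp.memLorentzDual hDp.norm_eq⟩
  exact exists_continuousLinearMap_of_range_le (lp.coeLinearMap (fun _ : ℕ => 𝕜) (ENNReal.ofReal s))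
    toSeqD (lp.continuous_coeLinearMap _ _) (hD.continuous_toSeq hw) hD.inj
    (by rintro _ ⟨f, rfl⟩; exact (hD.mem_range _).2 ((lp.memℓp f).memLorentzSpace hw hrs hwr))
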